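/- Let W₁ ∈ ℝ^{h×n}, W₂ ∈ ℝ^{m×h}, A₁ ∈ ℝ^{r×n}, B₁ ∈ ℝ^{h×r}, A₂ ∈ ℝ^{r×h}, B₂ ∈ ℝ^{m×r}, and E ∈ ℝ^{m×n}. Define F = W₂B₁A₁ + B₂A₂W₁ + B₂A₂B₁A₁ and D₁ = A₂ᵀB₂ᵀE − W₂ᵀF. Then, with ‖·‖ the spectral norm and ‖·‖_F the Frobenius norm, ‖D₁‖ ≤ ½(‖E‖ + ‖W₁‖·‖W₂‖)·(‖A₂‖_F² + ‖B₂‖_F²) + ½‖W₂‖²·(‖A₁‖_F² + ‖B₁‖_F²) + ¼‖W₂‖·(‖A₁‖_F² + ‖B₁‖_F²)·(‖A₂‖_F² + ‖B₂‖_F²). -/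
import Mathlib


open Matrix

noncomputable def frobSq {m n : Type*} [Fintype m] [Fintype n]
    (A : Matrix m n ℝ) : ℝ :=
  ∑ i, ∑ j, A i j ^ 2

noncomputable def specNorm {m n : Type*} [Fintype m] [Fintype n] [DecidableEq n]
    (A : Matrix m n ℝ) : ℝ :=
  ‖LinearMap.toContinuousLinearMap (Matrix.toEuclideanLin A)‖

open scoped Matrix.Norms.L2Operator

lemma specNorm_eq_norm {m n : Type*} [Fintype m] [Fintype n] [DecidableEq n]
    (A : Matrix m n ℝ) : specNorm A = ‖A‖ := rfl

lemma specNorm_mul_le {m n k : Type*} [Fintype m] [Fintype n] [Fintype k]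
    [DecidableEq n] [DecidableEq k]
    (A : Matrix m n ℝ) (B : Matrix n k ℝ) :
    specNorm (A * B) ≤ specNorm A * specNorm B := by
  simpa [specNorm_eq_norm] using Matrix.l2_opNorm_mul A B

lemma specNorm_transpose {m n : Type*} [Fintype m] [Fintype n] [DecidableEq m] [DecidableEq n]
    (A : Matrix m n ℝ) : specNorm Aᵀ = specNorm A := by
  rw [specNorm_eq_norm, specNorm_eq_norm, ← Matrix.conjTranspose_eq_transpose_of_trivial]
  exact Matrix.l2_opNorm_conjTranspose A

lemma frobSq_nonneg {m n : Type*} [Fintype m] [Fintype n] (A : Matrix m n ℝ) :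
    0 ≤ frobSq A :=
  Finset.sum_nonneg fun _ _ => Finset.sum_nonneg fun _ _ => sq_nonneg _

lemma specNorm_le_sqrt_frobSq {m n : Type*} [Fintype m] [Fintype n] [DecidableEq n]
    (A : Matrix m n ℝ) : specNorm A ≤ Real.sqrt (frobSq A) := by
  apply ContinuousLinearMap.opNorm_le_bound _ (Real.sqrt_nonneg _)
  intro x
  have hx : ‖x‖ = Real.sqrt (∑ j, x j ^ 2) := by
    simp [EuclideanSpace.norm_eq, Real.norm_eq_abs, sq_abs]
  have happ : (LinearMap.toContinuousLinearMap (Matrix.toEuclideanLin A)) x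
      = Matrix.toEuclideanLin A x := rfl
  rw [happ, hx]
  have hy : ‖Matrix.toEuclideanLin A x‖ = Real.sqrt (∑ i, (∑ j, A i j * x j) ^ 2) := by
    simp [EuclideanSpace.norm_eq, Real.norm_eq_abs, sq_abs, Matrix.toEuclideanLin_apply,
      Matrix.mulVec, dotProduct]
  rw [hy, ← Real.sqrt_mul (frobSq_nonneg A)]
  apply Real.sqrt_le_sqrt
  rw [frobSq, Finset.sum_mul]
  apply Finset.sum_le_sum
  intro i _
  exact Finset.sum_mul_sq_le_sq_mul_sq Finset.univ (fun j => A i j) (fun j => x j)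

lemma specNorm_mul_specNorm_le {m n p q : Type*} [Fintype m] [Fintype n] [Fintype p] [Fintype q]
    [DecidableEq n] [DecidableEq q] (A : Matrix m n ℝ) (B : Matrix p q ℝ) :
    specNorm A * specNorm B ≤ (frobSq A + frobSq B) / 2 := by
  have hA := specNorm_le_sqrt_frobSq A
  have hB := specNorm_le_sqrt_frobSq B
  have hA0 : (0:ℝ) ≤ specNorm A := norm_nonneg _
  have hB0 : (0:ℝ) ≤ specNorm B := norm_nonneg _
  have h1 : Real.sqrt (frobSq A) ^ 2 = frobSq A := Real.sq_sqrt (frobSq_nonneg A)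
  have h2 : Real.sqrt (frobSq B) ^ 2 = frobSq B := Real.sq_sqrt (frobSq_nonneg B)
  nlinarith [Real.sqrt_nonneg (frobSq A), Real.sqrt_nonneg (frobSq B),
    sq_nonneg (Real.sqrt (frobSq A) - Real.sqrt (frobSq B)),
    mul_le_mul hA hB hB0 (Real.sqrt_nonneg _)]

/-- With `F = W₂B₁A₁ + B₂A₂W₁ + B₂A₂B₁A₁` and
`D₁ = A₂ᵀB₂ᵀE − W₂ᵀF`, the perturbation `D₁` satisfies
`‖D₁‖ ≤ ½(‖E‖ + ‖W₁‖‖W₂‖)(‖A₂‖_F² + ‖B₂‖_F²) + ½‖W₂‖²(‖A₁‖_F² + ‖B₁‖_F²)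
 + ¼‖W₂‖(‖A₁‖_F² + ‖B₁‖_F²)(‖A₂‖_F² + ‖B₂‖_F²)`. -/
theorem perturbation_bound (m n h r : ℕ)
    (W₁ : Matrix (Fin h) (Fin n) ℝ) (W₂ : Matrix (Fin m) (Fin h) ℝ)
    (A₁ : Matrix (Fin r) (Fin n) ℝ) (B₁ : Matrix (Fin h) (Fin r) ℝ)
    (A₂ : Matrix (Fin r) (Fin h) ℝ) (B₂ : Matrix (Fin m) (Fin r) ℝ)
    (E : Matrix (Fin m) (Fin n) ℝ)
    (F : Matrix (Fin m) (Fin n) ℝ)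
    (hF : F = W₂ * B₁ * A₁ + B₂ * A₂ * W₁ + B₂ * A₂ * B₁ * A₁)
    (D₁ : Matrix (Fin h) (Fin n) ℝ)
    (hD₁ : D₁ = A₂ᵀ * B₂ᵀ * E - W₂ᵀ * F) :
    specNorm D₁ ≤ (1 / 2) * (specNorm E + specNorm W₁ * specNorm W₂) * (frobSq A₂ + frobSq B₂)
      + (1 / 2) * specNorm W₂ ^ 2 * (frobSq A₁ + frobSq B₁)
      + (1 / 4) * specNorm W₂ * (frobSq A₁ + frobSq B₁) * (frobSq A₂ + frobSq B₂) := by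
  subst hF hD₁
  have hsplit : A₂ᵀ * B₂ᵀ * E - W₂ᵀ * (W₂ * B₁ * A₁ + B₂ * A₂ * W₁ + B₂ * A₂ * B₁ * A₁)
      = A₂ᵀ * B₂ᵀ * E - (W₂ᵀ * (W₂ * B₁ * A₁) + W₂ᵀ * (B₂ * A₂ * W₁)
        + W₂ᵀ * (B₂ * A₂ * B₁ * A₁)) := by
    rw [Matrix.mul_add, Matrix.mul_add]
  rw [hsplit, specNorm_eq_norm]
  have htri : ‖A₂ᵀ * B₂ᵀ * E - (W₂ᵀ * (W₂ * B₁ * A₁) + W₂ᵀ * (B₂ * A₂ * W₁)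
        + W₂ᵀ * (B₂ * A₂ * B₁ * A₁))‖
      ≤ ‖A₂ᵀ * B₂ᵀ * E‖ + (‖W₂ᵀ * (W₂ * B₁ * A₁)‖ + ‖W₂ᵀ * (B₂ * A₂ * W₁)‖
        + ‖W₂ᵀ * (B₂ * A₂ * B₁ * A₁)‖) := by
    refine le_trans (norm_sub_le _ _) ?_
    gcongr
    exact le_trans (norm_add_le _ _) (by gcongr; exact norm_add_le _ _)
  refine le_trans htri ?_
  -- notation
  set sE := specNorm E with hsE
  set s1 := specNorm W₁ with hs1
  set s2 := specNorm W₂ with hs2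
  set a1 := specNorm A₁ with ha1
  set b1 := specNorm B₁ with hb1
  set a2 := specNorm A₂ with ha2
  set b2 := specNorm B₂ with hb2
  have nE : (0:ℝ) ≤ sE := norm_nonneg _
  have n1 : (0:ℝ) ≤ s1 := norm_nonneg _
  have n2 : (0:ℝ) ≤ s2 := norm_nonneg _
  have na1 : (0:ℝ) ≤ a1 := norm_nonneg _
  have nb1 : (0:ℝ) ≤ b1 := norm_nonneg _
  have na2 : (0:ℝ) ≤ a2 := norm_nonneg _
  have nb2 : (0:ℝ) ≤ b2 := norm_nonneg _
  have hT1 : ‖A₂ᵀ * B₂ᵀ * E‖ ≤ a2 * b2 * sE := by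
    rw [← specNorm_eq_norm]
    calc specNorm (A₂ᵀ * B₂ᵀ * E) ≤ specNorm (A₂ᵀ * B₂ᵀ) * specNorm E :=
          specNorm_mul_le _ _
      _ ≤ (specNorm A₂ᵀ * specNorm B₂ᵀ) * specNorm E := by
          gcongr; exact specNorm_mul_le _ _
      _ = a2 * b2 * sE := by rw [specNorm_transpose, specNorm_transpose]
  have hS1 : ‖W₂ᵀ * (W₂ * B₁ * A₁)‖ ≤ s2 * (s2 * b1 * a1) := by
    rw [← specNorm_eq_norm]
    calc specNorm (W₂ᵀ * (W₂ * B₁ * A₁)) ≤ specNorm W₂ᵀ * specNorm (W₂ * B₁ * A₁) :=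
          specNorm_mul_le _ _
      _ ≤ specNorm W₂ᵀ * (specNorm (W₂ * B₁) * specNorm A₁) := by
          gcongr; · exact norm_nonneg _
          · exact specNorm_mul_le _ _
      _ ≤ specNorm W₂ᵀ * (specNorm W₂ * specNorm B₁ * specNorm A₁) := by
          gcongr; · exact norm_nonneg _
          · exact specNorm_mul_le _ _
      _ = s2 * (s2 * b1 * a1) := by rw [specNorm_transpose]
  have hS2 : ‖W₂ᵀ * (B₂ * A₂ * W₁)‖ ≤ s2 * (b2 * a2 * s1) := by
    rw [← specNorm_eq_norm]
    calc specNorm (W₂ᵀ * (B₂ * A₂ * W₁)) ≤ specNorm W₂ᵀ * specNorm (B₂ * A₂ * W₁) :=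
          specNorm_mul_le _ _
      _ ≤ specNorm W₂ᵀ * (specNorm (B₂ * A₂) * specNorm W₁) := by
          gcongr; · exact norm_nonneg _
          · exact specNorm_mul_le _ _
      _ ≤ specNorm W₂ᵀ * (specNorm B₂ * specNorm A₂ * specNorm W₁) := by
          gcongr; · exact norm_nonneg _
          · exact specNorm_mul_le _ _
      _ = s2 * (b2 * a2 * s1) := by rw [specNorm_transpose]
  have hS3 : ‖W₂ᵀ * (B₂ * A₂ * B₁ * A₁)‖ ≤ s2 * (b2 * a2 * b1 * a1) := by
    rw [← specNorm_eq_norm]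
    calc specNorm (W₂ᵀ * (B₂ * A₂ * B₁ * A₁))
        ≤ specNorm W₂ᵀ * specNorm (B₂ * A₂ * B₁ * A₁) := specNorm_mul_le _ _
      _ ≤ specNorm W₂ᵀ * (specNorm (B₂ * A₂ * B₁) * specNorm A₁) := by
          gcongr; · exact norm_nonneg _
          · exact specNorm_mul_le _ _
      _ ≤ specNorm W₂ᵀ * (specNorm (B₂ * A₂) * specNorm B₁ * specNorm A₁) := by
          gcongr; · exact norm_nonneg _
          · exact specNorm_mul_le _ _
      _ ≤ specNorm W₂ᵀ * (specNorm B₂ * specNorm A₂ * specNorm B₁ * specNorm A₁) := by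
          gcongr; · exact norm_nonneg _
          · exact specNorm_mul_le _ _
      _ = s2 * (b2 * a2 * b1 * a1) := by rw [specNorm_transpose]
  have hab2 : a2 * b2 ≤ (frobSq A₂ + frobSq B₂) / 2 := specNorm_mul_specNorm_le _ _
  have hab1 : a1 * b1 ≤ (frobSq A₁ + frobSq B₁) / 2 := specNorm_mul_specNorm_le _ _
  have hf1 : (0:ℝ) ≤ frobSq A₁ + frobSq B₁ :=
    add_nonneg (frobSq_nonneg _) (frobSq_nonneg _)
  have hf2 : (0:ℝ) ≤ frobSq A₂ + frobSq B₂ :=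
    add_nonneg (frobSq_nonneg _) (frobSq_nonneg _)
  nlinarith [mul_le_mul_of_nonneg_right hab2 nE,
    mul_le_mul_of_nonneg_left hab1 (mul_nonneg n2 n2),
    mul_le_mul_of_nonneg_left hab2 (mul_nonneg n2 n1),
    mul_le_mul_of_nonneg_left (mul_le_mul hab2 hab1 (mul_nonneg na1 nb1) (by linarith)) n2,
    mul_nonneg na2 nb2, mul_nonneg na1 nb1]
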